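/- Let n ≥ 5 and let U₊ be the standard half-space bubble. Set 𝔤⁽²⁾ := ∫_{ℝⁿ₊} t²·‖∇U₊‖² dy′ dt and 𝔤⁽²⁾_tan := ∫_{ℝⁿ₊} t²·‖∇′U₊‖² dy′ dt (both finite, with 𝔤⁽²⁾ > 0). Then (3/(n−1))·𝔤⁽²⁾_tan − (1/2)·𝔤⁽²⁾ = ((4−n)/(2(n−1)))·𝔤⁽²⁾, and this quantity is strictly negative. -/

import Mathlib

open MeasureTheory

/-- The standard half-space bubble `U₊(y′,t) = (‖y′‖² + (1+t)²)^{-(n-2)/2}`. -/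
noncomputable def Uplus (n : ℕ) (y : EuclideanSpace ℝ (Fin (n - 1))) (t : ℝ) : ℝ :=
  (‖y‖ ^ 2 + (1 + t) ^ 2) ^ (-(((n : ℝ) - 2) / 2))

/-- Squared norm of the tangential gradient `∇′U₊`. -/
noncomputable def tanGradSq (n : ℕ) (y : EuclideanSpace ℝ (Fin (n - 1))) (t : ℝ) : ℝ :=
  ‖fderiv ℝ (fun y' => Uplus n y' t) y‖ ^ 2

/-- Square of the normal derivative `∂ₜU₊`. -/
noncomputable def normDerSq (n : ℕ) (y : EuclideanSpace ℝ (Fin (n - 1))) (t : ℝ) : ℝ :=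
  (deriv (fun t' => Uplus n y t') t) ^ 2

/-- Squared norm of the full gradient `∇U₊ = (∇′U₊, ∂ₜU₊)`. -/
noncomputable def gradSq (n : ℕ) (y : EuclideanSpace ℝ (Fin (n - 1))) (t : ℝ) : ℝ :=
  tanGradSq n y t + normDerSq n y t

namespace WillmoreAux

open Real Set

/-! ### Derivative computations -/

lemma hasFDerivAt_Uplus (n : ℕ) (t : ℝ) (ht : 0 < t) (y : EuclideanSpace ℝ (Fin (n-1))) :
    HasFDerivAt (fun y' => Uplus n y' t)
      (((-(((n:ℝ)-2)/2)) * (‖y‖^2 + (1+t)^2) ^ (-(((n:ℝ)-2)/2) - 1)) • ((2:ℝ) • innerSL ℝ y)) y := by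
  have hs : (0:ℝ) < ‖y‖^2 + (1+t)^2 := by positivity
  have h1 : HasFDerivAt (fun y' : EuclideanSpace ℝ (Fin (n-1)) => ‖y'‖^2 + (1+t)^2)
      ((2:ℝ) • innerSL ℝ y) y := by
    have := (hasFDerivAt_id y).norm_sq.add_const ((1+t)^2)
    simpa [two_smul, ContinuousLinearMap.comp_id] using this
  have h2 := (Real.hasDerivAt_rpow_const (x := ‖y‖^2+(1+t)^2) (p := -(((n:ℝ)-2)/2)) (Or.inl hs.ne'))
  exact h2.comp_hasFDerivAt y h1

lemma tanGradSq_eq (n : ℕ) (t : ℝ) (ht : 0 < t) (y : EuclideanSpace ℝ (Fin (n-1))) :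
    tanGradSq n y t = ((n:ℝ)-2)^2 * ‖y‖^2 * (‖y‖^2 + (1+t)^2) ^ (-(n:ℝ)) := by
  have hs : (0:ℝ) < ‖y‖^2 + (1+t)^2 := by positivity
  rw [tanGradSq, (hasFDerivAt_Uplus n t ht y).fderiv]
  rw [norm_smul, norm_smul, innerSL_apply_norm]
  rw [mul_pow, mul_pow]
  have h1 : ((‖y‖^2 + (1+t)^2) ^ (-(((n:ℝ)-2)/2) - 1))^2
      = (‖y‖^2 + (1+t)^2) ^ (-(n:ℝ)) := by
    rw [← Real.rpow_natCast ((‖y‖^2 + (1+t)^2) ^ (-(((n:ℝ)-2)/2) - 1)) 2, ← Real.rpow_mul hs.le]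
    norm_num
    ring_nf
    rw [Real.rpow_neg (by nlinarith [sq_nonneg (1+t), sq_nonneg ‖y‖]), Real.rpow_natCast, inv_pow]
  have h2 : |(-(((n:ℝ)-2)/2))| ^ 2 = (((n:ℝ)-2)/2)^2 := by
    rw [sq_abs]; ring
  rw [Real.norm_eq_abs, Real.norm_eq_abs, abs_mul, mul_pow, h2,
    abs_of_pos (Real.rpow_pos_of_pos hs _), h1]
  have h3 : |(2:ℝ)| = 2 := by norm_num
  rw [h3]
  ring

lemma hasDerivAt_Uplus (n : ℕ) (t : ℝ) (ht : 0 < t) (y : EuclideanSpace ℝ (Fin (n-1))) :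
    HasDerivAt (fun t' => Uplus n y t')
      ((-(((n:ℝ)-2)/2)) * (‖y‖^2 + (1+t)^2) ^ (-(((n:ℝ)-2)/2) - 1) * (2*(1+t))) t := by
  have hs : (0:ℝ) < ‖y‖^2 + (1+t)^2 := by positivity
  have h1 : HasDerivAt (fun t' : ℝ => ‖y‖^2 + (1+t')^2) (2*(1+t)) t := by
    have := (((hasDerivAt_id t).const_add 1).pow 2).const_add (‖y‖^2)
    simpa [mul_comm] using this
  have h2 := (Real.hasDerivAt_rpow_const (x := ‖y‖^2+(1+t)^2) (p := -(((n:ℝ)-2)/2)) (Or.inl hs.ne'))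
  exact h2.comp t h1

lemma normDerSq_eq (n : ℕ) (t : ℝ) (ht : 0 < t) (y : EuclideanSpace ℝ (Fin (n-1))) :
    normDerSq n y t = ((n:ℝ)-2)^2 * (1+t)^2 * (‖y‖^2 + (1+t)^2) ^ (-(n:ℝ)) := by
  have hs : (0:ℝ) < ‖y‖^2 + (1+t)^2 := by positivity
  rw [normDerSq, (hasDerivAt_Uplus n t ht y).deriv]
  have h1 : ((‖y‖^2 + (1+t)^2) ^ (-(((n:ℝ)-2)/2) - 1))^2
      = (‖y‖^2 + (1+t)^2) ^ (-(n:ℝ)) := by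
    rw [← Real.rpow_natCast ((‖y‖^2 + (1+t)^2) ^ (-(((n:ℝ)-2)/2) - 1)) 2, ← Real.rpow_mul hs.le]
    norm_num; ring_nf
    rw [Real.rpow_neg (by nlinarith [sq_nonneg (1+t), sq_nonneg ‖y‖]), Real.rpow_natCast, inv_pow]
  rw [mul_pow, mul_pow, h1]
  ring

/-! ### The key vanishing integral -/

lemma inv1D (k : ℕ) :
    ∫ r in Ioi (0:ℝ), r ^ k * ((r^2 - 1) * (1 + r^2) ^ (-((k:ℝ)+2))) = 0 := by
  set g : ℝ → ℝ := fun r => r ^ k * ((r^2 - 1) * (1 + r^2) ^ (-((k:ℝ)+2))) with hg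
  have h := MeasureTheory.integral_comp_rpow_Ioi g (p := (-1:ℝ)) (by norm_num)
  have h2 : ∀ x ∈ Ioi (0:ℝ), (|(-1:ℝ)| * x ^ ((-1:ℝ)-1)) • g (x^(-1:ℝ)) = -g x := by
    intro x hx
    have hx0 : (0:ℝ) < x := hx
    have hxne : x ≠ 0 := hx0.ne'
    have e1 : x ^ ((-1:ℝ)) = x⁻¹ := Real.rpow_neg_one x
    have e2 : x ^ ((-1:ℝ)-1) = (x^2)⁻¹ := by
      rw [show ((-1:ℝ)-1) = -(2:ℕ) by norm_num, Real.rpow_neg hx0.le,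
        Real.rpow_natCast]
    have e3 : (1 + (x⁻¹)^2) ^ (-((k:ℝ)+2))
        = (1 + x^2) ^ (-((k:ℝ)+2)) * x ^ (2*(k+2)) := by
      have hb : (1 + (x⁻¹)^2) = (1+x^2) * (x^2)⁻¹ := by field_simp; ring
      rw [hb, Real.mul_rpow (by positivity) (by positivity), Real.inv_rpow (by positivity),
        ← Real.rpow_neg (by positivity), neg_neg,
        show ((k:ℝ)+2) = ((k+2:ℕ):ℝ) by push_cast; ring, Real.rpow_natCast, ← pow_mul,
        mul_comm 2 (k+2)]
    rw [e1, e2, hg]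
    simp only [smul_eq_mul, abs_neg, abs_one, one_mul]
    rw [e3]
    have hA : (0:ℝ) < (1+x^2) ^ (-((k:ℝ)+2)) := by positivity
    set A := (1+x^2) ^ (-((k:ℝ)+2))
    field_simp
    have hk : x ^ (k*2) * x⁻¹ ^ k = x ^ k := by
      rw [inv_pow, ← div_eq_mul_inv, div_eq_iff (pow_ne_zero _ hxne)]; ring
    linear_combination (x^4 - x^6) * hk
  rw [setIntegral_congr_fun measurableSet_Ioi h2, integral_neg] at h
  linarith

lemma K_eq_zero (n : ℕ) (hn : 5 ≤ n) :
    ∫ z : EuclideanSpace ℝ (Fin (n-1)), (‖z‖^2 - 1) * (1 + ‖z‖^2) ^ (-(n:ℝ)) = 0 := by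
  haveI : Nontrivial (EuclideanSpace ℝ (Fin (n-1))) := by
    apply Module.nontrivial_of_finrank_pos (R := ℝ)
    rw [finrank_euclideanSpace_fin]
    omega
  have h := MeasureTheory.integral_fun_norm_addHaar (volume : Measure (EuclideanSpace ℝ (Fin (n-1))))
    (fun r : ℝ => (r^2 - 1) * (1 + r^2) ^ (-(n:ℝ)))
  rw [h]
  have hd : Module.finrank ℝ (EuclideanSpace ℝ (Fin (n-1))) = n - 1 := finrank_euclideanSpace_fin
  rw [hd]
  have : ∫ r in Ioi (0:ℝ), r ^ (n-1-1) • ((r^2 - 1) * (1 + r^2) ^ (-(n:ℝ))) = 0 := by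
    have hcast : (-(n:ℝ)) = -(((n-2:ℕ):ℝ)+2) := by
      have : ((n-2:ℕ):ℝ) = (n:ℝ) - 2 := by
        push_cast [Nat.cast_sub (by omega : 2 ≤ n)]; ring
      rw [this]; ring
    have h2 := inv1D (n-2)
    simp only [smul_eq_mul]
    rw [show n-1-1 = n-2 by omega, hcast]
    exact h2
  rw [this]
  simp

/-! ### Scaling lemmas -/

lemma cast_nsub (n : ℕ) (hn : 5 ≤ n) : ((n-1:ℕ):ℝ) = (n:ℝ)-1 := by
  push_cast [Nat.cast_sub (by omega : 1 ≤ n)]; ring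

lemma norm_smul_inv_sq (n : ℕ) (c : ℝ) (hc : 0 < c) (y : EuclideanSpace ℝ (Fin (n-1))) :
    ‖c⁻¹ • y‖^2 = ‖y‖^2 * (c^2)⁻¹ := by
  rw [norm_smul]
  simp [mul_pow, norm_inv, Real.norm_eq_abs, abs_of_pos hc]
  ring

lemma smul_base (n : ℕ) (c : ℝ) (hc : 0 < c) (y : EuclideanSpace ℝ (Fin (n-1))) (q : ℝ) :
    ((1:ℝ) + ‖c⁻¹ • y‖^2) ^ q = (‖y‖^2 + c^2) ^ q * (((c^2:ℝ)) ^ q)⁻¹ := by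
  have hb : 1 + ‖c⁻¹ • y‖^2 = (‖y‖^2 + c^2) * (c^2)⁻¹ := by
    rw [norm_smul_inv_sq n c hc y]; field_simp; ring
  rw [hb, Real.mul_rpow (by positivity) (by positivity), Real.inv_rpow (by positivity)]

lemma diff_eq_zero (n : ℕ) (hn : 5 ≤ n) (c : ℝ) (hc : 0 < c) :
    ∫ y : EuclideanSpace ℝ (Fin (n-1)), (‖y‖^2 - c^2) * (‖y‖^2 + c^2) ^ (-(n:ℝ)) = 0 := by
  have hΦ : ∀ y : EuclideanSpace ℝ (Fin (n-1)),
      (‖y‖^2 - c^2) * (‖y‖^2 + c^2) ^ (-(n:ℝ))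
      = (c^2 * (((c^2:ℝ)) ^ (-(n:ℝ)))) *
        ((‖c⁻¹ • y‖^2 - 1) * (1 + ‖c⁻¹ • y‖^2) ^ (-(n:ℝ))) := by
    intro y
    rw [smul_base n c hc y (-(n:ℝ)), norm_smul_inv_sq n c hc y]
    have hA : (0:ℝ) < (‖y‖^2 + c^2) ^ (-(n:ℝ)) := by positivity
    have hB : (0:ℝ) < ((c^2:ℝ)) ^ (-(n:ℝ)) := by positivity
    set A := (‖y‖^2 + c^2) ^ (-(n:ℝ))
    set B := ((c^2:ℝ)) ^ (-(n:ℝ))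
    field_simp
  calc ∫ y : EuclideanSpace ℝ (Fin (n-1)), (‖y‖^2 - c^2) * (‖y‖^2 + c^2) ^ (-(n:ℝ))
      = ∫ y : EuclideanSpace ℝ (Fin (n-1)), (c^2 * (((c^2:ℝ)) ^ (-(n:ℝ)))) *
        ((‖c⁻¹ • y‖^2 - 1) * (1 + ‖c⁻¹ • y‖^2) ^ (-(n:ℝ))) :=
        integral_congr_ae (Filter.Eventually.of_forall hΦ)
    _ = (c^2 * (((c^2:ℝ)) ^ (-(n:ℝ)))) * ∫ y : EuclideanSpace ℝ (Fin (n-1)),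
        ((‖c⁻¹ • y‖^2 - 1) * (1 + ‖c⁻¹ • y‖^2) ^ (-(n:ℝ))) := integral_const_mul _ _
    _ = 0 := by
        rw [MeasureTheory.Measure.integral_comp_inv_smul volume
          (fun z : EuclideanSpace ℝ (Fin (n-1)) => (‖z‖^2 - 1) * (1 + ‖z‖^2) ^ (-(n:ℝ))) c,
          K_eq_zero n hn]
        simp

lemma integrable_base (n : ℕ) (c : ℝ) (hc : 0 < c) {p : ℝ}
    (hp : ((n-1:ℕ):ℝ) < 2*p) :
    Integrable (fun y : EuclideanSpace ℝ (Fin (n-1)) => (‖y‖^2 + c^2) ^ (-p)) := by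
  have h0 : Integrable (fun z : EuclideanSpace ℝ (Fin (n-1)) => ((1:ℝ) + ‖z‖^2) ^ (-(2*p)/2)) :=
    integrable_rpow_neg_one_add_norm_sq (by rw [finrank_euclideanSpace_fin]; exact hp)
  have h1 : Integrable (fun z : EuclideanSpace ℝ (Fin (n-1)) => ((1:ℝ) + ‖z‖^2) ^ (-p)) := by
    have : (-(2*p)/2) = -p := by ring
    rwa [this] at h0
  have h2 : Integrable (fun y : EuclideanSpace ℝ (Fin (n-1)) => ((1:ℝ) + ‖c⁻¹ • y‖^2) ^ (-p)) :=
    h1.comp_smul (inv_ne_zero hc.ne')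
  have h3 := h2.const_mul (((c^2:ℝ)) ^ (-p))
  apply h3.congr
  apply Filter.Eventually.of_forall
  intro y
  show ((c^2:ℝ)) ^ (-p) * ((1:ℝ) + ‖c⁻¹ • y‖^2) ^ (-p) = (‖y‖^2 + c^2) ^ (-p)
  rw [smul_base n c hc y (-p)]
  have hB : (0:ℝ) < ((c^2:ℝ)) ^ (-p) := by positivity
  field_simp

lemma integral_base (n : ℕ) (c : ℝ) (hc : 0 < c) (p : ℝ) :
    ∫ y : EuclideanSpace ℝ (Fin (n-1)), (‖y‖^2 + c^2) ^ (-p)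
      = ((c^2:ℝ)) ^ (-p) * c ^ ((n-1:ℕ)) *
        ∫ z : EuclideanSpace ℝ (Fin (n-1)), ((1:ℝ) + ‖z‖^2) ^ (-p) := by
  have hΦ : ∀ y : EuclideanSpace ℝ (Fin (n-1)),
      (‖y‖^2 + c^2) ^ (-p) = ((c^2:ℝ)) ^ (-p) * ((1:ℝ) + ‖c⁻¹ • y‖^2) ^ (-p) := by
    intro y
    rw [smul_base n c hc y (-p)]
    have hB : (0:ℝ) < ((c^2:ℝ)) ^ (-p) := by positivity
    field_simp
  rw [integral_congr_ae (Filter.Eventually.of_forall hΦ), integral_const_mul,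
    MeasureTheory.Measure.integral_comp_inv_smul volume
      (fun z : EuclideanSpace ℝ (Fin (n-1)) => ((1:ℝ) + ‖z‖^2) ^ (-p)) c,
    finrank_euclideanSpace_fin, smul_eq_mul, abs_of_pos (by positivity : (0:ℝ) < c ^ (n-1)),
    ← mul_assoc]

/-! ### Inner integrals at fixed `t` -/

lemma integrable_f1 (n : ℕ) (hn : 5 ≤ n) (c : ℝ) (hc : 0 < c) :
    Integrable (fun y : EuclideanSpace ℝ (Fin (n-1)) =>
      ‖y‖^2 * (‖y‖^2 + c^2) ^ (-(n:ℝ))) := by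
  have hg : Integrable (fun y : EuclideanSpace ℝ (Fin (n-1)) =>
      (‖y‖^2 + c^2) ^ (-((n:ℝ)-1))) := by
    apply integrable_base n c hc
    rw [cast_nsub n hn]
    have : (5:ℝ) ≤ (n:ℝ) := by exact_mod_cast hn
    linarith
  apply hg.mono
  · apply Continuous.aestronglyMeasurable
    exact (continuous_norm.pow 2).mul
      (((continuous_norm.pow 2).add continuous_const).rpow_const
        (fun y => Or.inl (ne_of_gt (by have := sq_nonneg ‖y‖; have := mul_pos hc hc; show (0:ℝ) < ‖y‖^2 + c^2; nlinarith))))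
  · apply Filter.Eventually.of_forall
    intro y
    have hs : (0:ℝ) < ‖y‖^2 + c^2 := by positivity
    rw [Real.norm_eq_abs, Real.norm_eq_abs, abs_of_nonneg (by positivity),
      abs_of_nonneg (by positivity)]
    calc ‖y‖^2 * (‖y‖^2 + c^2) ^ (-(n:ℝ))
        ≤ (‖y‖^2 + c^2) * (‖y‖^2 + c^2) ^ (-(n:ℝ)) := by
          apply mul_le_mul_of_nonneg_right _ (Real.rpow_nonneg hs.le _)
          nlinarith [sq_nonneg c]
      _ = (‖y‖^2 + c^2) ^ (-((n:ℝ)-1)) := by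
          rw [show -((n:ℝ)-1) = -(n:ℝ) + 1 by ring, Real.rpow_add_one hs.ne', mul_comm]

lemma integrable_f2 (n : ℕ) (hn : 5 ≤ n) (c : ℝ) (hc : 0 < c) :
    Integrable (fun y : EuclideanSpace ℝ (Fin (n-1)) =>
      c^2 * (‖y‖^2 + c^2) ^ (-(n:ℝ))) := by
  apply Integrable.const_mul
  apply integrable_base n c hc
  rw [cast_nsub n hn]
  have : (5:ℝ) ≤ (n:ℝ) := by exact_mod_cast hn
  linarith

lemma inner_swap (n : ℕ) (hn : 5 ≤ n) (c : ℝ) (hc : 0 < c) :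
    ∫ y : EuclideanSpace ℝ (Fin (n-1)), ‖y‖^2 * (‖y‖^2 + c^2) ^ (-(n:ℝ))
    = ∫ y : EuclideanSpace ℝ (Fin (n-1)), c^2 * (‖y‖^2 + c^2) ^ (-(n:ℝ)) := by
  have h := integral_sub (integrable_f1 n hn c hc) (integrable_f2 n hn c hc)
  have h2 : (fun y : EuclideanSpace ℝ (Fin (n-1)) =>
      ‖y‖^2 * (‖y‖^2 + c^2) ^ (-(n:ℝ)) - c^2 * (‖y‖^2 + c^2) ^ (-(n:ℝ)))
      = fun y => (‖y‖^2 - c^2) * (‖y‖^2 + c^2) ^ (-(n:ℝ)) := by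
    funext y; ring
  rw [h2, diff_eq_zero n hn c hc] at h
  linarith [h]

noncomputable def Iconst (n : ℕ) : ℝ :=
  ∫ z : EuclideanSpace ℝ (Fin (n-1)), ((1:ℝ) + ‖z‖^2) ^ (-((n:ℝ)-1))

lemma integrable_tan (n : ℕ) (hn : 5 ≤ n) (t : ℝ) (ht : 0 < t) :
    Integrable (fun y : EuclideanSpace ℝ (Fin (n-1)) => t^2 * tanGradSq n y t) := by
  have hc : (0:ℝ) < 1 + t := by linarith
  have := ((integrable_f1 n hn (1+t) hc).const_mul (((n:ℝ)-2)^2 * t^2))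
  apply this.congr
  apply Filter.Eventually.of_forall
  intro y
  dsimp only
  rw [tanGradSq_eq n t ht y]
  ring

lemma integrable_nor (n : ℕ) (hn : 5 ≤ n) (t : ℝ) (ht : 0 < t) :
    Integrable (fun y : EuclideanSpace ℝ (Fin (n-1)) => t^2 * normDerSq n y t) := by
  have hc : (0:ℝ) < 1 + t := by linarith
  have := ((integrable_f2 n hn (1+t) hc).const_mul (((n:ℝ)-2)^2 * t^2))
  apply this.congr
  apply Filter.Eventually.of_forall
  intro y
  dsimp only
  rw [normDerSq_eq n t ht y]
  ring

lemma integrable_grad (n : ℕ) (hn : 5 ≤ n) (t : ℝ) (ht : 0 < t) :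
    Integrable (fun y : EuclideanSpace ℝ (Fin (n-1)) => t^2 * gradSq n y t) := by
  have := (integrable_tan n hn t ht).add (integrable_nor n hn t ht)
  apply this.congr
  apply Filter.Eventually.of_forall
  intro y
  simp only [Pi.add_apply, gradSq]
  ring

lemma innerG_split (n : ℕ) (hn : 5 ≤ n) (t : ℝ) (ht : 0 < t) :
    ∫ y : EuclideanSpace ℝ (Fin (n-1)), t^2 * gradSq n y t
    = 2 * ∫ y : EuclideanSpace ℝ (Fin (n-1)), t^2 * tanGradSq n y t := by
  have hc : (0:ℝ) < 1 + t := by linarith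
  have hsplit : ∫ y : EuclideanSpace ℝ (Fin (n-1)), t^2 * gradSq n y t
      = (∫ y : EuclideanSpace ℝ (Fin (n-1)), t^2 * tanGradSq n y t)
        + ∫ y : EuclideanSpace ℝ (Fin (n-1)), t^2 * normDerSq n y t := by
    rw [← integral_add (integrable_tan n hn t ht) (integrable_nor n hn t ht)]
    apply integral_congr_ae; apply Filter.Eventually.of_forall; intro y
    simp only [Pi.add_apply, gradSq]; ring
  have htan : ∫ y : EuclideanSpace ℝ (Fin (n-1)), t^2 * tanGradSq n y t
      = (((n:ℝ)-2)^2 * t^2) *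
        ∫ y : EuclideanSpace ℝ (Fin (n-1)), ‖y‖^2 * (‖y‖^2 + (1+t)^2) ^ (-(n:ℝ)) := by
    rw [← integral_const_mul]
    apply integral_congr_ae; apply Filter.Eventually.of_forall; intro y
    dsimp only
    rw [tanGradSq_eq n t ht y]; ring
  have hnor : ∫ y : EuclideanSpace ℝ (Fin (n-1)), t^2 * normDerSq n y t
      = (((n:ℝ)-2)^2 * t^2) *
        ∫ y : EuclideanSpace ℝ (Fin (n-1)), (1+t)^2 * (‖y‖^2 + (1+t)^2) ^ (-(n:ℝ)) := by
    rw [← integral_const_mul]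
    apply integral_congr_ae; apply Filter.Eventually.of_forall; intro y
    dsimp only
    rw [normDerSq_eq n t ht y]; ring
  rw [hsplit, htan, hnor, ← inner_swap n hn (1+t) hc]
  ring

lemma innerG_val (n : ℕ) (hn : 5 ≤ n) (t : ℝ) (ht : 0 < t) :
    ∫ y : EuclideanSpace ℝ (Fin (n-1)), t^2 * gradSq n y t
    = (((n:ℝ)-2)^2 * Iconst n) * (t^2 * (1+t) ^ ((1:ℝ)-(n:ℝ))) := by
  have hc : (0:ℝ) < 1 + t := by linarith
  have hpt : ∀ y : EuclideanSpace ℝ (Fin (n-1)),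
      t^2 * gradSq n y t = (((n:ℝ)-2)^2 * t^2) * (‖y‖^2 + (1+t)^2) ^ (-((n:ℝ)-1)) := by
    intro y
    have hs : (0:ℝ) < ‖y‖^2 + (1+t)^2 := by positivity
    simp only [gradSq]
    rw [tanGradSq_eq n t ht y, normDerSq_eq n t ht y,
      show -((n:ℝ)-1) = -(n:ℝ) + 1 by ring, Real.rpow_add_one hs.ne']
    ring
  rw [integral_congr_ae (Filter.Eventually.of_forall hpt), integral_const_mul,
    integral_base n (1+t) hc ((n:ℝ)-1)]
  have hcollapse : (((1+t)^2:ℝ)) ^ (-((n:ℝ)-1)) * (1+t) ^ ((n-1:ℕ)) = (1+t) ^ ((1:ℝ)-(n:ℝ)) := by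
    rw [← Real.rpow_natCast (1+t) (n-1), cast_nsub n hn,
      ← Real.rpow_natCast (1+t) 2, ← Real.rpow_mul hc.le,
      ← Real.rpow_add hc]
    norm_num
    ring_nf
  rw [mul_comm ((((1+t)^2:ℝ)) ^ (-((n:ℝ)-1))) ((1+t) ^ ((n-1:ℕ)))] at hcollapse ⊢
  rw [mul_assoc, hcollapse, Iconst]
  ring

/-! ### Outer integral facts -/

lemma integrable_Iconst (n : ℕ) (hn : 5 ≤ n) :
    Integrable (fun z : EuclideanSpace ℝ (Fin (n-1)) => ((1:ℝ) + ‖z‖^2) ^ (-((n:ℝ)-1))) := by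
  have h0 : Integrable (fun z : EuclideanSpace ℝ (Fin (n-1)) =>
      ((1:ℝ) + ‖z‖^2) ^ (-(2*((n:ℝ)-1))/2)) := by
    apply integrable_rpow_neg_one_add_norm_sq
    rw [finrank_euclideanSpace_fin, cast_nsub n hn]
    have : (5:ℝ) ≤ (n:ℝ) := by exact_mod_cast hn
    linarith
  have : (-(2*((n:ℝ)-1))/2) = -((n:ℝ)-1) := by ring
  rwa [this] at h0

lemma Iconst_pos (n : ℕ) (hn : 5 ≤ n) : 0 < Iconst n := by
  rw [Iconst]
  rw [integral_pos_iff_support_of_nonneg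
    (fun z => Real.rpow_nonneg (by positivity) _) (integrable_Iconst n hn)]
  have hsupp : Function.support (fun z : EuclideanSpace ℝ (Fin (n-1)) =>
      ((1:ℝ) + ‖z‖^2) ^ (-((n:ℝ)-1))) = Set.univ := by
    apply Set.eq_univ_iff_forall.mpr
    intro z
    exact (Real.rpow_pos_of_pos (by positivity) _).ne'
  rw [hsupp]
  exact isOpen_univ.measure_pos volume univ_nonempty

lemma outer_majorant_integrable (n : ℕ) (hn : 5 ≤ n) :
    IntegrableOn (fun t : ℝ => (1+t) ^ ((3:ℝ)-(n:ℝ))) (Ioi 0) := by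
  have hsplit : Ioi (0:ℝ) = Ioc 0 1 ∪ Ioi 1 := (Ioc_union_Ioi_eq_Ioi zero_le_one).symm
  rw [hsplit]
  apply IntegrableOn.union
  · apply (ContinuousOn.integrableOn_Icc _).mono_set Ioc_subset_Icc_self
    apply ContinuousOn.rpow_const
    · exact (continuous_const.add continuous_id).continuousOn
    · intro x hx
      left
      have : (0:ℝ) ≤ x := hx.1
      positivity
  · have hmaj : IntegrableOn (fun t : ℝ => t ^ ((3:ℝ)-(n:ℝ))) (Ioi 1) := by
      apply integrableOn_Ioi_rpow_of_lt _ one_pos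
      have : (5:ℝ) ≤ (n:ℝ) := by exact_mod_cast hn
      linarith
    apply Integrable.mono hmaj
    · apply ContinuousOn.aestronglyMeasurable _ measurableSet_Ioi
      apply ContinuousOn.rpow_const
      · exact (continuous_const.add continuous_id).continuousOn
      · intro x hx
        left
        have : (1:ℝ) < x := hx
        positivity
    · apply (ae_restrict_iff' measurableSet_Ioi).mpr
      apply Filter.Eventually.of_forall
      intro t ht
      have ht1 : (1:ℝ) < t := ht
      have h30 : (3:ℝ)-(n:ℝ) ≤ 0 := by
        have : (5:ℝ) ≤ (n:ℝ) := by exact_mod_cast hn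
        linarith
      rw [Real.norm_eq_abs, Real.norm_eq_abs, abs_of_nonneg (Real.rpow_nonneg (by linarith) _),
        abs_of_nonneg (Real.rpow_nonneg (by linarith) _)]
      exact Real.rpow_le_rpow_of_nonpos (by linarith) (by linarith) h30

lemma outer_integrable (n : ℕ) (hn : 5 ≤ n) (C : ℝ) :
    IntegrableOn (fun t : ℝ => C * (t^2 * (1+t) ^ ((1:ℝ)-(n:ℝ)))) (Ioi 0) := by
  apply Integrable.const_mul
  apply Integrable.mono (outer_majorant_integrable n hn)
  · apply ContinuousOn.aestronglyMeasurable _ measurableSet_Ioi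
    apply ContinuousOn.mul (continuous_pow 2).continuousOn
    apply ContinuousOn.rpow_const
    · exact (continuous_const.add continuous_id).continuousOn
    · intro x hx
      left
      have : (0:ℝ) < x := hx
      positivity
  · apply (ae_restrict_iff' measurableSet_Ioi).mpr
    apply Filter.Eventually.of_forall
    intro t ht
    have ht0 : (0:ℝ) < t := ht
    have hc : (0:ℝ) < 1 + t := by linarith
    rw [Real.norm_eq_abs, Real.norm_eq_abs, abs_of_nonneg (by positivity),
      abs_of_nonneg (Real.rpow_nonneg hc.le _)]
    calc t^2 * (1+t) ^ ((1:ℝ)-(n:ℝ))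
        ≤ (1+t)^2 * (1+t) ^ ((1:ℝ)-(n:ℝ)) := by
          apply mul_le_mul_of_nonneg_right _ (Real.rpow_nonneg hc.le _)
          nlinarith
      _ = (1+t) ^ ((3:ℝ)-(n:ℝ)) := by
          rw [← Real.rpow_natCast (1+t) 2, ← Real.rpow_add hc,
            show ((2:ℕ):ℝ) + ((1:ℝ)-(n:ℝ)) = (3:ℝ)-(n:ℝ) by push_cast; ring]

lemma gradSq_nonneg (n : ℕ) (y : EuclideanSpace ℝ (Fin (n-1))) (t : ℝ) :
    0 ≤ gradSq n y t :=
  add_nonneg (sq_nonneg _) (sq_nonneg _)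

lemma tan_le_grad (n : ℕ) (y : EuclideanSpace ℝ (Fin (n-1))) (t : ℝ) :
    tanGradSq n y t ≤ gradSq n y t :=
  le_add_of_nonneg_right (sq_nonneg _)

end WillmoreAux

open WillmoreAux Set

/-- The Willmore coefficient combination of `t²`-weighted moments:
`(3/(n−1))·𝔤⁽²⁾_tan − (1/2)·𝔤⁽²⁾ = ((4−n)/(2(n−1)))·𝔤⁽²⁾ < 0` for `n ≥ 5`,
with both moments finite and `𝔤⁽²⁾ > 0`. -/
theorem willmore_coefficient_negative (n : ℕ) (hn : 5 ≤ n) (g2 g2tan : ℝ)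
    (hg2 : g2 = ∫ t in Set.Ioi (0 : ℝ),
      ∫ y : EuclideanSpace ℝ (Fin (n - 1)), t ^ 2 * gradSq n y t)
    (hg2tan : g2tan = ∫ t in Set.Ioi (0 : ℝ),
      ∫ y : EuclideanSpace ℝ (Fin (n - 1)), t ^ 2 * tanGradSq n y t) :
    ((∫⁻ t in Set.Ioi (0 : ℝ), ∫⁻ y : EuclideanSpace ℝ (Fin (n - 1)),
        ENNReal.ofReal (t ^ 2 * gradSq n y t)) < ⊤)
    ∧ ((∫⁻ t in Set.Ioi (0 : ℝ), ∫⁻ y : EuclideanSpace ℝ (Fin (n - 1)),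
        ENNReal.ofReal (t ^ 2 * tanGradSq n y t)) < ⊤)
    ∧ 0 < g2
    ∧ ((3 / ((n : ℝ) - 1)) * g2tan - (1 / 2) * g2
        = ((4 - (n : ℝ)) / (2 * ((n : ℝ) - 1))) * g2)
    ∧ (3 / ((n : ℝ) - 1)) * g2tan - (1 / 2) * g2 < 0 := by
  have hnR : (5:ℝ) ≤ (n:ℝ) := by exact_mod_cast hn
  set CI : ℝ := ((n:ℝ)-2)^2 * Iconst n with hCIdef
  have hCI : 0 < CI := by
    apply mul_pos _ (Iconst_pos n hn)
    have : (0:ℝ) < (n:ℝ)-2 := by linarith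
    positivity
  set φ : ℝ → ℝ := fun t => CI * (t^2 * (1+t) ^ ((1:ℝ)-(n:ℝ))) with hφdef
  -- inner lintegral equals ofReal of φ on Ioi 0
  have hinner : ∀ t ∈ Ioi (0:ℝ),
      (∫⁻ y : EuclideanSpace ℝ (Fin (n - 1)), ENNReal.ofReal (t ^ 2 * gradSq n y t))
      = ENNReal.ofReal (φ t) := by
    intro t ht
    rw [← MeasureTheory.ofReal_integral_eq_lintegral_ofReal (integrable_grad n hn t ht)
      (Filter.Eventually.of_forall (fun y => mul_nonneg (sq_nonneg t) (gradSq_nonneg n y t)))]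
    rw [innerG_val n hn t ht]
  -- finiteness of the full-gradient moment
  have hfin1 : (∫⁻ t in Ioi (0:ℝ), ∫⁻ y : EuclideanSpace ℝ (Fin (n - 1)),
      ENNReal.ofReal (t ^ 2 * gradSq n y t)) < ⊤ := by
    rw [MeasureTheory.setLIntegral_congr_fun measurableSet_Ioi
      hinner]
    have hle : (∫⁻ t in Ioi (0:ℝ), ENNReal.ofReal (φ t))
        ≤ ∫⁻ t in Ioi (0:ℝ), (‖φ t‖₊ : ENNReal) := by
      apply MeasureTheory.lintegral_mono
      intro t
      dsimp only
      rw [← enorm_eq_nnnorm, Real.enorm_eq_ofReal_abs]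
      exact ENNReal.ofReal_le_ofReal (le_abs_self _)
    exact lt_of_le_of_lt hle (outer_integrable n hn CI).hasFiniteIntegral
  -- finiteness of the tangential moment
  have hfin2 : (∫⁻ t in Ioi (0:ℝ), ∫⁻ y : EuclideanSpace ℝ (Fin (n - 1)),
      ENNReal.ofReal (t ^ 2 * tanGradSq n y t)) < ⊤ := by
    refine lt_of_le_of_lt ?_ hfin1
    apply MeasureTheory.lintegral_mono
    intro t
    apply MeasureTheory.lintegral_mono
    intro y
    exact ENNReal.ofReal_le_ofReal
      (mul_le_mul_of_nonneg_left (tan_le_grad n y t) (sq_nonneg t))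
  -- value of g2
  have hval : g2 = ∫ t in Ioi (0:ℝ), φ t := by
    rw [hg2]
    exact MeasureTheory.setIntegral_congr_fun measurableSet_Ioi
      (fun t ht => innerG_val n hn t ht)
  -- positivity
  have hpos : 0 < g2 := by
    rw [hval]
    rw [MeasureTheory.integral_pos_iff_support_of_nonneg_ae]
    · have hsub : Ioi (0:ℝ) ⊆ Function.support φ := by
        intro t ht
        have ht0 : (0:ℝ) < t := ht
        have hc : (0:ℝ) < 1 + t := by linarith
        have : 0 < φ t := by
          apply mul_pos hCI
          exact mul_pos (by positivity) (Real.rpow_pos_of_pos hc _)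
        exact this.ne'
      have h1 : (0:ENNReal) < volume (Ioi (0:ℝ)) := by
        rw [Real.volume_Ioi]
        exact ENNReal.zero_lt_top
      refine lt_of_lt_of_le h1 ?_
      rw [MeasureTheory.Measure.restrict_apply' measurableSet_Ioi]
      exact measure_mono (subset_inter hsub (subset_refl _))
    · apply (ae_restrict_iff' measurableSet_Ioi).mpr
      apply Filter.Eventually.of_forall
      intro t ht
      have ht0 : (0:ℝ) < t := ht
      have hc : (0:ℝ) < 1 + t := by linarith
      exact le_of_lt (mul_pos hCI (mul_pos (by positivity) (Real.rpow_pos_of_pos hc _)))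
    · exact outer_integrable n hn CI
  -- the halving identity
  have hhalf : g2 = 2 * g2tan := by
    rw [hg2, hg2tan, ← MeasureTheory.integral_const_mul]
    exact MeasureTheory.setIntegral_congr_fun measurableSet_Ioi
      (fun t ht => innerG_split n hn t ht)
  have hne : (n:ℝ) - 1 ≠ 0 := by linarith
  have hiden : (3 / ((n : ℝ) - 1)) * g2tan - (1 / 2) * g2
      = ((4 - (n : ℝ)) / (2 * ((n : ℝ) - 1))) * g2 := by
    have hg2tan' : g2tan = g2 / 2 := by linarith
    rw [hg2tan']
    field_simp
    ring
  refine ⟨hfin1, hfin2, hpos, hiden, ?_⟩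
  rw [hiden]
  apply mul_neg_of_neg_of_pos _ hpos
  apply div_neg_of_neg_of_pos <;> linarith
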